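/- Assume that the system {1, f_1, …, f_L} is linearly independent modulo μ. Let U ⊆ ℝ^L be an open set and suppose λ̂ : U → ℝ^L satisfies the Lagrange-multiplier equation ∫_X f dE(λ̂(m), μ) = m for every m ∈ U. Then λ̂ is differentiable on U, and its derivative at m is the inverse of the Hessian of the log-partition function: Dλ̂(m) = (Hess_λ A(λ̂(m), μ))^{-1}, i.e. the inverse of the covariance matrix of f under E(λ̂(m), μ). -/

import Mathlib

open MeasureTheory
open scoped RealInnerProductSpace

/-!
The moment map `G(λ) = ∫ f dE(λ, μ)` is `C¹`. Along a line `s ↦ λ + s • v`, the function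
`⟪v, G(λ + s • v)⟫` is the derivative of the cumulant generating function of `⟪v, f⟫` under
`E(λ, μ)`, so its own derivative is the variance of `⟪v, f⟫` under `E(λ + s • v, μ)`. That
variance is positive, because linear independence of `{1, f_1, …, f_L}` forbids `⟪v, f⟫` from
being a.e. constant. Hence `G` is injective and `DG(λ)` is invertible for every `λ`. By the
inverse function theorem `G` has a differentiable local inverse near `λ̂(m)`, and by injectivity
`λ̂` agrees with it near `m`.
-/

open ProbabilityTheory Real Filter Topology

section InnerBounds

variable {E F : Type*} [NormedAddCommGroup E] [InnerProductSpace ℝ E]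
  [NormedAddCommGroup F] [NormedSpace ℝ F] {B C : ℝ}

lemma exp_inner_le_exp_mul {l v : E} {r : ℝ} (hv : ‖v‖ ≤ B) (hl : ‖l‖ ≤ r) :
    exp ⟪l, v⟫ ≤ exp (r * B) :=
  exp_le_exp.2 <| (real_inner_le_norm l v).trans <|
    mul_le_mul hl hv (norm_nonneg v) ((norm_nonneg l).trans hl)

lemma abs_inner_le_norm_mul_of_norm_le {w : E} (hw : ‖w‖ ≤ B) (v : E) :
    |⟪v, w⟫| ≤ ‖v‖ * B :=
  (abs_real_inner_le_norm v w).trans (mul_le_mul_of_nonneg_left hw (norm_nonneg v))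

lemma norm_innerSL_smulRight_le {v : E} {w : F} (hv : ‖v‖ ≤ B) (hw : ‖w‖ ≤ C) :
    ‖(innerSL ℝ v).smulRight w‖ ≤ B * C := by
  rw [ContinuousLinearMap.norm_smulRight_apply, innerSL_apply_norm]
  exact mul_le_mul hv hw (norm_nonneg _) ((norm_nonneg _).trans hv)

end InnerBounds

section ExpInnerIntegral

variable {X E F : Type*} [MeasurableSpace X] [NormedAddCommGroup E] [InnerProductSpace ℝ E]
  [NormedAddCommGroup F] [NormedSpace ℝ F] {μ : Measure X} {f : X → E} {B C : ℝ}

lemma aestronglyMeasurable_exp_inner (hf : AEStronglyMeasurable f μ) (l : E) :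
    AEStronglyMeasurable (fun x => exp ⟪l, f x⟫) μ :=
  continuous_exp.comp_aestronglyMeasurable (aestronglyMeasurable_const.inner hf)

lemma aestronglyMeasurable_innerSL_smulRight (hf : AEStronglyMeasurable f μ) {g : X → F}
    (hg : AEStronglyMeasurable g μ) :
    AEStronglyMeasurable (fun x => (innerSL ℝ (f x)).smulRight (g x)) μ :=
  isBoundedBilinearMap_smulRight.continuous.comp_aestronglyMeasurable
    (((innerSL ℝ).continuous.comp_aestronglyMeasurable hf).prodMk hg)

variable [IsFiniteMeasure μ]

lemma integrable_exp_inner_smul (hf : AEStronglyMeasurable f μ) (hfB : ∀ x, ‖f x‖ ≤ B)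
    {g : X → F} (hg : AEStronglyMeasurable g μ) (hgC : ∀ x, ‖g x‖ ≤ C) (l : E) :
    Integrable (fun x => exp ⟪l, f x⟫ • g x) μ := by
  refine .of_bound ((aestronglyMeasurable_exp_inner hf l).smul hg) (exp (‖l‖ * B) * C)
    (ae_of_all _ fun x => ?_)
  rw [norm_smul, norm_of_nonneg (exp_pos _).le]
  exact mul_le_mul (exp_inner_le_exp_mul (hfB x) le_rfl) (hgC x) (norm_nonneg _) (exp_pos _).le

lemma integrable_exp_inner (hf : AEStronglyMeasurable f μ) (hfB : ∀ x, ‖f x‖ ≤ B) (l : E) :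
    Integrable (fun x => exp ⟪l, f x⟫) μ := by
  simpa using integrable_exp_inner_smul (C := 1) hf hfB (g := fun _ => (1 : ℝ))
    aestronglyMeasurable_const (fun _ => norm_one.le) l

lemma hasFDerivAt_integral_exp_inner_smul (hf : AEStronglyMeasurable f μ)
    (hfB : ∀ x, ‖f x‖ ≤ B) {g : X → F} (hg : AEStronglyMeasurable g μ) (hgC : ∀ x, ‖g x‖ ≤ C)
    (l₀ : E) :
    HasFDerivAt (fun l => ∫ x, exp ⟪l, f x⟫ • g x ∂μ)
      (∫ x, exp ⟪l₀, f x⟫ • (innerSL ℝ (f x)).smulRight (g x) ∂μ) l₀ := by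
  refine hasFDerivAt_integral_of_dominated_of_fderiv_le (Metric.ball_mem_nhds l₀ one_pos)
    (F' := fun l x => exp ⟪l, f x⟫ • (innerSL ℝ (f x)).smulRight (g x))
    (bound := fun _ => exp ((‖l₀‖ + 1) * B) * (B * C))
    (.of_forall fun l => (aestronglyMeasurable_exp_inner hf l).smul hg)
    (integrable_exp_inner_smul hf hfB hg hgC l₀)
    ((aestronglyMeasurable_exp_inner hf l₀).smul (aestronglyMeasurable_innerSL_smulRight hf hg))
    (ae_of_all _ fun x l hl => ?_) (integrable_const _) (ae_of_all _ fun x l _ => ?_)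
  · have hl' : ‖l‖ ≤ ‖l₀‖ + 1 := by
      linarith [norm_le_norm_add_norm_sub' l l₀, mem_ball_iff_norm.1 hl]
    rw [norm_smul, norm_of_nonneg (exp_pos _).le]
    exact mul_le_mul (exp_inner_le_exp_mul (hfB x) hl')
      (norm_innerSL_smulRight_le (hfB x) (hgC x)) (norm_nonneg _) (exp_pos _).le
  · have hinner : HasFDerivAt (fun l : E => ⟪l, f x⟫) (innerSL ℝ (f x)) l := by
      convert (innerSL ℝ (f x)).hasFDerivAt using 1
      ext l
      simp [real_inner_comm]
    refine (((hasDerivAt_exp _).comp_hasFDerivAt l hinner).smul_const (g x)).congr_fderiv ?_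
    ext v
    simp [mul_smul]

lemma contDiff_integral_exp_inner_smul (hf : AEStronglyMeasurable f μ)
    (hfB : ∀ x, ‖f x‖ ≤ B) {g : X → F} (hg : AEStronglyMeasurable g μ) (hgC : ∀ x, ‖g x‖ ≤ C) :
    ContDiff ℝ 1 (fun l => ∫ x, exp ⟪l, f x⟫ • g x ∂μ) := by
  refine contDiff_one_iff_hasFDerivAt.2 ⟨_, ?_, hasFDerivAt_integral_exp_inner_smul hf hfB hg hgC⟩
  exact continuous_iff_continuousAt.2 fun l => (hasFDerivAt_integral_exp_inner_smul hf hfB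
    (aestronglyMeasurable_innerSL_smulRight hf hg)
    (fun x => norm_innerSL_smulRight_le (hfB x) (hgC x)) l).continuousAt

end ExpInnerIntegral

section Tilted

variable {X : Type*} [MeasurableSpace X] {μ : Measure X}

lemma withDensity_exp_sub_log_integral_eq_tilted {φ : X → ℝ} (hφ : 0 < ∫ x, exp (φ x) ∂μ) :
    μ.withDensity (fun x => ENNReal.ofReal (exp (φ x - log (∫ x, exp (φ x) ∂μ)))) =
      μ.tilted φ := by
  rw [Measure.tilted]
  congr with x
  rw [exp_sub, exp_log hφ]

lemma integrableExpSet_eq_univ_of_abs_le [IsFiniteMeasure μ] {Y : X → ℝ} {C : ℝ}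
    (hY : AEStronglyMeasurable Y μ) (hYC : ∀ x, |Y x| ≤ C) : integrableExpSet Y μ = Set.univ := by
  refine Set.eq_univ_of_forall fun t => Integrable.of_bound
    (continuous_exp.comp_aestronglyMeasurable (hY.const_mul t)) (exp (|t| * C))
    (ae_of_all _ fun x => ?_)
  rw [norm_of_nonneg (exp_pos _).le, exp_le_exp]
  calc t * Y x ≤ |t| * |Y x| := (le_abs_self _).trans (abs_mul t (Y x)).le
    _ ≤ |t| * C := mul_le_mul_of_nonneg_left (hYC x) (abs_nonneg t)

lemma hasDerivAt_deriv_cgf {Y : X → ℝ} {t : ℝ} (ht : t ∈ interior (integrableExpSet Y μ)) :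
    HasDerivAt (deriv (cgf Y μ)) Var[Y; μ.tilted (t * Y ·)] t := by
  rw [variance_tilted_mul ht, iteratedDeriv_succ, iteratedDeriv_one]
  exact (analyticAt_cgf ht).deriv.differentiableAt.hasDerivAt

lemma variance_pos_of_forall_not_ae_eq [IsFiniteMeasure μ] {Y : X → ℝ} (hY : MemLp Y 2 μ)
    (h : ∀ c : ℝ, ¬ ∀ᵐ x ∂μ, Y x = c) : 0 < Var[Y; μ] :=
  (variance_nonneg Y μ).lt_of_ne fun h0 => h _ (ae_eq_integral_of_variance_eq_zero hY h0.symm)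

end Tilted

section MomentMap

variable {X E : Type*} [MeasurableSpace X] [NormedAddCommGroup E] [InnerProductSpace ℝ E]
  {μ : Measure X} {f : X → E} {B : ℝ}

/-- The system `{1, f_1, …, f_L}` is linearly independent modulo `μ`. -/
def LinearIndependentModulo (μ : Measure X) (f : X → E) : Prop :=
  ∀ (l0 : ℝ) (l : E), (l0, l) ≠ (0, 0) → μ {x | l0 + ⟪l, f x⟫ = 0} = 0

lemma LinearIndependentModulo.not_ae_inner_eq_const [NeZero μ]
    (hindep : LinearIndependentModulo μ f) {v : E} (hv : v ≠ 0) (c : ℝ) : ¬ ∀ᵐ x ∂μ, ⟪v, f x⟫ = c := by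
  intro hc
  have hne : ∀ᵐ x ∂μ, x ∉ {x | -c + ⟪v, f x⟫ = 0} :=
    measure_eq_zero_iff_ae_notMem.1 (hindep (-c) v (by simp [hv]))
  obtain ⟨x, hx, hx'⟩ := (hc.and hne).exists
  exact hx' (by simp [hx])

/-- `μ.tilted (⟪l, f ·⟫)` is the exponential family member `E(l, μ)`. -/
noncomputable def momentMap (μ : Measure X) (f : X → E) (l : E) : E :=
  ∫ x, f x ∂μ.tilted fun x => ⟪l, f x⟫

lemma momentMap_eq_smul (l : E) :
    momentMap μ f l = (∫ x, exp ⟪l, f x⟫ ∂μ)⁻¹ • ∫ x, exp ⟪l, f x⟫ • f x ∂μ := by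
  rw [momentMap, integral_tilted, ← integral_smul]
  simp_rw [div_eq_inv_mul, mul_smul]

variable [IsFiniteMeasure μ]

lemma contDiff_momentMap [NeZero μ] (hf : AEStronglyMeasurable f μ) (hfB : ∀ x, ‖f x‖ ≤ B) :
    ContDiff ℝ 1 (momentMap μ f) := by
  have hZ : ContDiff ℝ 1 fun l => ∫ x, exp ⟪l, f x⟫ ∂μ := by
    simpa using contDiff_integral_exp_inner_smul (C := 1) hf hfB (g := fun _ => (1 : ℝ))
      aestronglyMeasurable_const (fun _ => norm_one.le)
  rw [funext momentMap_eq_smul]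
  exact (hZ.inv fun l => (integral_exp_pos (integrable_exp_inner hf hfB l)).ne').smul
    (contDiff_integral_exp_inner_smul hf hfB hf hfB)

lemma tilted_inner_add_smul (hf : AEStronglyMeasurable f μ) (hfB : ∀ x, ‖f x‖ ≤ B)
    (l v : E) (t : ℝ) :
    μ.tilted (fun x => ⟪l + t • v, f x⟫) =
      (μ.tilted fun x => ⟪l, f x⟫).tilted (t * ⟪v, f ·⟫) := by
  rw [tilted_tilted (integrable_exp_inner hf hfB l)]
  congr with x
  simp [inner_add_left, inner_smul_left]

lemma variance_inner_tilted_pos [NeZero μ] (hf : AEStronglyMeasurable f μ)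
    (hfB : ∀ x, ‖f x‖ ≤ B) (hindep : LinearIndependentModulo μ f) (l : E) {v : E} (hv : v ≠ 0) :
    0 < Var[(⟪v, f ·⟫); μ.tilted fun x => ⟪l, f x⟫] :=
  variance_pos_of_forall_not_ae_eq
    (.of_bound ((aestronglyMeasurable_const.inner hf).mono_ac (tilted_absolutelyContinuous _ _))
      _ (ae_of_all _ fun x => (norm_eq_abs _).trans_le
        (abs_inner_le_norm_mul_of_norm_le (hfB x) v)))
    fun c hc => hindep.not_ae_inner_eq_const hv c
      ((absolutelyContinuous_tilted (integrable_exp_inner hf hfB l)).ae_le hc)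

variable [CompleteSpace E]

lemma hasDerivAt_inner_momentMap_line (hf : AEStronglyMeasurable f μ) (hfB : ∀ x, ‖f x‖ ≤ B)
    (l v : E) (t : ℝ) :
    HasDerivAt (fun s : ℝ => ⟪v, momentMap μ f (l + s • v)⟫)
      Var[(⟪v, f ·⟫); μ.tilted fun x => ⟪l + t • v, f x⟫] t := by
  set ν := μ.tilted fun x => ⟪l, f x⟫
  have hν : ∀ s : ℝ, s ∈ interior (integrableExpSet (⟪v, f ·⟫) ν) := by
    rw [integrableExpSet_eq_univ_of_abs_le
      ((aestronglyMeasurable_const.inner hf).mono_ac (tilted_absolutelyContinuous _ _))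
      fun x => abs_inner_le_norm_mul_of_norm_le (hfB x) v]
    simp
  have hline : (fun s : ℝ => ⟪v, momentMap μ f (l + s • v)⟫) = deriv (cgf (⟪v, f ·⟫) ν) := by
    funext s
    have hint : Integrable f (μ.tilted fun x => ⟪l + s • v, f x⟫) :=
      .of_bound (hf.mono_ac (tilted_absolutelyContinuous _ _)) B (ae_of_all _ hfB)
    rw [momentMap, ← integral_inner hint, tilted_inner_add_smul hf hfB,
      integral_tilted_mul_self (hν s)]
  rw [hline, tilted_inner_add_smul hf hfB]
  exact hasDerivAt_deriv_cgf (hν t)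

variable [NeZero μ]

lemma strictMono_inner_momentMap_line (hf : AEStronglyMeasurable f μ) (hfB : ∀ x, ‖f x‖ ≤ B)
    (hindep : LinearIndependentModulo μ f) (l : E) {v : E} (hv : v ≠ 0) :
    StrictMono fun s : ℝ => ⟪v, momentMap μ f (l + s • v)⟫ :=
  strictMono_of_hasDerivAt_pos (hasDerivAt_inner_momentMap_line hf hfB l v)
    fun _ => variance_inner_tilted_pos hf hfB hindep _ hv

lemma momentMap_injective (hf : AEStronglyMeasurable f μ) (hfB : ∀ x, ‖f x‖ ≤ B)
    (hindep : LinearIndependentModulo μ f) : Function.Injective (momentMap μ f) := by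
  intro l₁ l₂ h
  by_contra hne
  have hmono := strictMono_inner_momentMap_line hf hfB hindep l₂ (sub_ne_zero.2 hne)
    zero_lt_one
  simp [h] at hmono

lemma inner_fderiv_momentMap_pos (hf : AEStronglyMeasurable f μ) (hfB : ∀ x, ‖f x‖ ≤ B)
    (hindep : LinearIndependentModulo μ f) (l : E) {v : E} (hv : v ≠ 0) :
    0 < ⟪v, fderiv ℝ (momentMap μ f) l v⟫ := by
  have hchain : HasDerivAt (fun s : ℝ => ⟪v, momentMap μ f (l + s • v)⟫)
      ⟪v, fderiv ℝ (momentMap μ f) l v⟫ 0 := by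
    have hG := ((contDiff_momentMap hf hfB).differentiable one_ne_zero l).hasFDerivAt
    have hline : HasDerivAt (fun s : ℝ => l + s • v) v 0 := by
      simpa using ((hasDerivAt_id (0 : ℝ)).smul_const v).const_add l
    exact (innerSL ℝ v).hasFDerivAt.comp_hasDerivAt 0
      (hG.comp_hasDerivAt_of_eq 0 hline (by simp))
  rw [hchain.unique (hasDerivAt_inner_momentMap_line hf hfB l v 0)]
  exact variance_inner_tilted_pos hf hfB hindep _ hv

end MomentMap

lemma exists_continuousLinearEquiv_of_inner_apply_pos {E : Type*} [NormedAddCommGroup E]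
    [InnerProductSpace ℝ E] [FiniteDimensional ℝ E] (T : E →L[ℝ] E)
    (hT : ∀ v, v ≠ 0 → 0 < ⟪v, T v⟫) : ∃ Φ : E ≃L[ℝ] E, (Φ : E →L[ℝ] E) = T := by
  have hinj : Function.Injective T := (injective_iff_map_eq_zero T).2 fun v hv =>
    by_contra fun hne => by simpa [hv] using hT v hne
  exact ⟨(LinearEquiv.ofInjectiveEndo T.toLinearMap hinj).toContinuousLinearEquiv, rfl⟩

lemma HasStrictFDerivAt.hasFDerivAt_rightInverse_of_injective {𝕜 E F : Type*}
    [NontriviallyNormedField 𝕜] [NormedAddCommGroup E] [NormedSpace 𝕜 E] [CompleteSpace E]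
    [NormedAddCommGroup F] [NormedSpace 𝕜 F] {G : E → F} {Φ : E ≃L[𝕜] F} {a : E}
    (hG : HasStrictFDerivAt G (Φ : E →L[𝕜] F) a) (hinj : Function.Injective G) {g : F → E}
    (hg : ∀ᶠ y in 𝓝 (G a), G (g y) = y) : HasFDerivAt g (Φ.symm : F →L[𝕜] E) (G a) := by
  refine hG.to_localInverse.hasFDerivAt.congr_of_eventuallyEq ?_
  filter_upwards [hg, hG.eventually_right_inverse] with y hy hy'
  exact hinj (hy.trans hy'.symm)

theorem lagrange_multiplier_differentiable_general
    {X : Type*} [MeasurableSpace X] {L : ℕ}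
    (μ : Measure X) [IsProbabilityMeasure μ]
    (f : X → EuclideanSpace ℝ (Fin L)) (hf_meas : Measurable f)
    (B : ℝ) (hf_bdd : ∀ x, ‖f x‖ ≤ B)
    (hindep : ∀ (l0 : ℝ) (l : EuclideanSpace ℝ (Fin L)),
      (l0, l) ≠ (0, 0) → μ {x | l0 + ⟪l, f x⟫ = 0} = 0)
    (A : EuclideanSpace ℝ (Fin L) → ℝ)
    (hA : ∀ l, A l = Real.log (∫ x, Real.exp ⟪l, f x⟫ ∂μ))
    (G : EuclideanSpace ℝ (Fin L) → EuclideanSpace ℝ (Fin L))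
    (hG : ∀ l, G l = ∫ x, f x
       ∂(μ.withDensity (fun x => ENNReal.ofReal (Real.exp (⟪l, f x⟫ - A l)))))
    (U : Set (EuclideanSpace ℝ (Fin L))) (hU : IsOpen U)
    (lam : EuclideanSpace ℝ (Fin L) → EuclideanSpace ℝ (Fin L))
    (hlam : ∀ m ∈ U, G (lam m) = m) :
    ∀ m ∈ U, ∃ D : EuclideanSpace ℝ (Fin L) →L[ℝ] EuclideanSpace ℝ (Fin L),
      HasFDerivAt lam D m ∧
      D.comp (fderiv ℝ G (lam m)) = ContinuousLinearMap.id ℝ (EuclideanSpace ℝ (Fin L)) ∧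
      (fderiv ℝ G (lam m)).comp D = ContinuousLinearMap.id ℝ (EuclideanSpace ℝ (Fin L)) := by
  intro m hm
  have hf : AEStronglyMeasurable f μ := hf_meas.aestronglyMeasurable
  obtain rfl : G = momentMap μ f := funext fun l => by
    rw [hG, hA, withDensity_exp_sub_log_integral_eq_tilted
      (integral_exp_pos (integrable_exp_inner hf hf_bdd l)), momentMap]
  obtain ⟨Φ, hΦ⟩ := exists_continuousLinearEquiv_of_inner_apply_pos _
    fun v hv => inner_fderiv_momentMap_pos hf hf_bdd hindep (lam m) hv
  have hstrict : HasStrictFDerivAt (momentMap μ f) (Φ : _ →L[ℝ] _) (lam m) :=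
    hΦ ▸ (contDiff_momentMap hf hf_bdd).contDiffAt.hasStrictFDerivAt one_ne_zero
  have hright : ∀ᶠ y in 𝓝 (momentMap μ f (lam m)), momentMap μ f (lam y) = y := by
    rw [hlam m hm]
    exact eventually_of_mem (hU.mem_nhds hm) hlam
  refine ⟨Φ.symm, ?_, hΦ ▸ Φ.coe_symm_comp_coe, hΦ ▸ Φ.coe_comp_coe_symm⟩
  simpa [hlam m hm] using
    hstrict.hasFDerivAt_rightInverse_of_injective (momentMap_injective hf hf_bdd hindep) hright

/-- If {1, f_1, …, f_L} is linearly independent modulo μ and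
λ̂ : U → ℝ^L solves the Lagrange-multiplier equation ∫ f dE(λ̂(m), μ) = m on an open
set U, then λ̂ is differentiable on U and its derivative at m is the inverse of the
Hessian of A(·, μ) at λ̂(m), i.e. the inverse of the derivative of the moment map
G(λ) = ∫ f dE(λ, μ) (the covariance matrix of f under E(λ̂(m), μ)). -/
theorem lagrange_multiplier_differentiable
    {X : Type*} [MeasurableSpace X] {L : ℕ} (hL : 0 < L)
    (μ : Measure X) [IsProbabilityMeasure μ]
    (f : X → EuclideanSpace ℝ (Fin L)) (hf_meas : Measurable f)
    (B : ℝ) (hf_bdd : ∀ x, ‖f x‖ ≤ B)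
    (hindep : ∀ (l0 : ℝ) (l : EuclideanSpace ℝ (Fin L)),
      (l0, l) ≠ (0, 0) → μ {x | l0 + ⟪l, f x⟫ = 0} = 0)
    (A : EuclideanSpace ℝ (Fin L) → ℝ)
    (hA : ∀ l, A l = Real.log (∫ x, Real.exp ⟪l, f x⟫ ∂μ))
    (G : EuclideanSpace ℝ (Fin L) → EuclideanSpace ℝ (Fin L))
    (hG : ∀ l, G l = ∫ x, f x
       ∂(μ.withDensity (fun x => ENNReal.ofReal (Real.exp (⟪l, f x⟫ - A l)))))
    (U : Set (EuclideanSpace ℝ (Fin L))) (hU : IsOpen U)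
    (lam : EuclideanSpace ℝ (Fin L) → EuclideanSpace ℝ (Fin L))
    (hlam : ∀ m ∈ U, G (lam m) = m) :
    ∀ m ∈ U, ∃ D : EuclideanSpace ℝ (Fin L) →L[ℝ] EuclideanSpace ℝ (Fin L),
      HasFDerivAt lam D m ∧
      D.comp (fderiv ℝ G (lam m)) = ContinuousLinearMap.id ℝ (EuclideanSpace ℝ (Fin L)) ∧
      (fderiv ℝ G (lam m)).comp D = ContinuousLinearMap.id ℝ (EuclideanSpace ℝ (Fin L)) :=
  lagrange_multiplier_differentiable_general μ f hf_meas B hf_bdd hindep A hA G hG U hU lam hlam
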